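/- For a finite set X and a binary relation θ ⊆ X×X, let L(θ) be the PBR on (X,X) consisting of all edges of ε_X together with the edges (y^(c),y'^(c)) for (y,y') ∈ θ. Then: (i) L(θ)∘L(θ') = L(θ ∪ θ') for all θ, θ' ⊆ X×X; (ii) L is injective and its image is exactly the set PI(X,l) of left polarized idempotents on (X,X). Consequently PI(X,l) is a submonoid of the monoid of PBRs on (X,X) under composition, isomorphic to the commutative band (semilattice) of binary relations on X under union, and |PI(X,l)| = 2^{|X|²}; the analogous statements hold for the set PI(X,r) of right polarized idempotents. -/

import Mathlib

namespace PBRPaper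

/-- A partitioned binary relation (PBR) on `(X, Y)`: a binary relation on
the disjoint union `X ⊕ Y`. -/
abbrev PBR (X Y : Type) : Type := Set ((X ⊕ Y) × (X ⊕ Y))

variable {X Y Z : Type}

/-- The inclusion of `X ⊕ Y` into `X ⊕ Y ⊕ Z`. -/
def ι₁ : X ⊕ Y → X ⊕ Y ⊕ Z := Sum.elim Sum.inl fun y => Sum.inr (Sum.inl y)

/-- The inclusion of `Y ⊕ Z` into `X ⊕ Y ⊕ Z`. -/
def ι₂ : Y ⊕ Z → X ⊕ Y ⊕ Z :=
  Sum.elim (fun y => Sum.inr (Sum.inl y)) fun z => Sum.inr (Sum.inr z)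

/-- The inclusion of `X ⊕ Z` into `X ⊕ Y ⊕ Z`. -/
def ι₀ : X ⊕ Z → X ⊕ Y ⊕ Z := Sum.elim Sum.inl fun z => Sum.inr (Sum.inr z)

/-- Labeled edges in the ambient `X ⊕ Y ⊕ Z`: label `false` means
"an edge of `α`", label `true` means "an edge of `β`". -/
def EdgeMem (α : PBR X Y) (β : PBR Y Z)
    (e : Bool × (X ⊕ Y ⊕ Z) × (X ⊕ Y ⊕ Z)) : Prop :=
  if e.1 then ∃ p ∈ β, ι₂ p.1 = e.2.1 ∧ ι₂ p.2 = e.2.2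
  else ∃ p ∈ α, ι₁ p.1 = e.2.1 ∧ ι₁ p.2 = e.2.2

/-- An `(α,β)`-connected sequence: a nonempty list of labeled edges of `α`/`β`,
no two successive edges from the same PBR, endpoints matching up. -/
def IsConnSeq (α : PBR X Y) (β : PBR Y Z)
    (L : List (Bool × (X ⊕ Y ⊕ Z) × (X ⊕ Y ⊕ Z))) : Prop :=
  L ≠ [] ∧ (∀ e ∈ L, EdgeMem α β e) ∧
    L.Chain' fun e f => e.1 ≠ f.1 ∧ e.2.2 = f.2.1

/-- `L` is an `(α,β)`-connected sequence connecting `a` to `b`. -/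
def ConnectsVia (α : PBR X Y) (β : PBR Y Z)
    (L : List (Bool × (X ⊕ Y ⊕ Z) × (X ⊕ Y ⊕ Z))) (a b : X ⊕ Z) : Prop :=
  IsConnSeq α β L ∧ L.head?.map (fun e => e.2.1) = some (ι₀ a) ∧
    L.getLast?.map (fun e => e.2.2) = some (ι₀ b)

/-- Composition of partitioned binary relations. -/
def comp (β : PBR Y Z) (α : PBR X Y) : PBR X Z :=
  {p | ∃ L, ConnectsVia α β L p.1 p.2}

/-- The identity PBR `ε_X`, consisting of all edges `(x^(d), x^(c))`
and `(x^(c), x^(d))`. -/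
def eps (X : Type) : PBR X X :=
  {p | ∃ x : X, p = (Sum.inl x, Sum.inr x) ∨ p = (Sum.inr x, Sum.inl x)}

/-- A labeled edge is `(α,β)`-frothy if it is an edge of the corresponding PBR
occurring in no `(α,β)`-connected sequence connecting two elements of `X ⊕ Z`. -/
def IsFrothy (α : PBR X Y) (β : PBR Y Z)
    (e : Bool × (X ⊕ Y ⊕ Z) × (X ⊕ Y ⊕ Z)) : Prop :=
  EdgeMem α β e ∧ ∀ L a b, ConnectsVia α β L a b → e ∉ L

/-- An `(α,β)`-frothy cycle. -/
def IsFrothyCycle (α : PBR X Y) (β : PBR Y Z)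
    (L : List (Bool × (X ⊕ Y ⊕ Z) × (X ⊕ Y ⊕ Z))) : Prop :=
  IsConnSeq α β L ∧ 2 ≤ L.length ∧
    L.getLast?.map (fun e => e.2.2) = L.head?.map (fun e => e.2.1) ∧
    L.head?.map (fun e => e.1) ≠ L.getLast?.map (fun e => e.1) ∧
    ∀ e ∈ L, IsFrothy α β e

/-- The type of `(α,β)`-frothy cycles. -/
def FrothyCycles (α : PBR X Y) (β : PBR Y Z) :=
  {L : List (Bool × (X ⊕ Y ⊕ Z) × (X ⊕ Y ⊕ Z)) // IsFrothyCycle α β L}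

/-- `𝔣((α,β))`: the number of equivalence classes of `(α,β)`-frothy cycles,
where the equivalence is generated by elementary equivalence (sharing a common
edge of the same PBR); note that naive equivalence (cyclic permutation) is
subsumed, since a cycle and any of its cyclic permutations share all edges. -/
noncomputable def fPBR (α : PBR X Y) (β : PBR Y Z) : ℕ :=
  Nat.card (Quot fun L L' : FrothyCycles α β => ∃ e, e ∈ L.1 ∧ e ∈ L'.1)

variable {X : Type} in
/-- `L(θ)`: the left polarized idempotent with codomain-codomain edges given
by `θ`. -/
def Lmap (θ : Set (X × X)) : PBR X X :=
  eps X ∪ {p | ∃ q ∈ θ, p = (Sum.inr q.1, Sum.inr q.2)}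

variable {X : Type} in
/-- `R(θ)`: the right polarized idempotent with domain-domain edges given
by `θ`. -/
def Rmap (θ : Set (X × X)) : PBR X X :=
  eps X ∪ {p | ∃ q ∈ θ, p = (Sum.inl q.1, Sum.inl q.2)}

variable {X : Type} in
/-- A left polarized idempotent: a PBR on `(X,X)` containing all edges of
`ε_X`, any other edge joining two elements of the codomain copy. -/
def IsLeftPol (α : PBR X X) : Prop :=
  eps X ⊆ α ∧ ∀ p ∈ α, p ∈ eps X ∨ ∃ y y' : X, p = (Sum.inr y, Sum.inr y')

variable {X : Type} in
/-- A right polarized idempotent: a PBR on `(X,X)` containing all edges of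
`ε_X`, any other edge joining two elements of the domain copy. -/
def IsRightPol (α : PBR X X) : Prop :=
  eps X ⊆ α ∧ ∀ p ∈ α, p ∈ eps X ∨ ∃ x x' : X, p = (Sum.inl x, Sum.inl x')

/-!
In an `(L θ', L θ)`-connected sequence two successive edges meet in the middle copy of `X`,
and the only edges touching it are the `ε`-edges and the edges of `θ'`. Hence the label and
the endpoint of the last edge range over a handful of states, each of which either lies in the
middle copy or closes an edge of `L (θ ∪ θ')`; conversely every edge of `L (θ ∪ θ')` is
realised by a sequence of at most three edges. Swapping domain and codomain reverses
composition and carries `L θ` to `R θ` and `PI(X,l)` onto `PI(X,r)`, which transfers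
everything to the right polarized side.
-/

theorem isConnSeq_iff {α : PBR X Y} {β : PBR Y Z}
    {L : List (Bool × (X ⊕ Y ⊕ Z) × (X ⊕ Y ⊕ Z))} :
    IsConnSeq α β L ↔
      L ≠ [] ∧ (∀ e ∈ L, EdgeMem α β e) ∧ L.IsChain (fun e f => e.1 ≠ f.1 ∧ e.2.2 = f.2.1) :=
  Iff.rfl

theorem comp_subset_of_invariant {α : PBR X Y} {β : PBR Y Z} {S : PBR X Z}
    (P : X ⊕ Z → Bool → X ⊕ Y ⊕ Z → Prop)
    (init : ∀ a e, EdgeMem α β e → e.2.1 = ι₀ a → P a e.1 e.2.2)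
    (step : ∀ a e, EdgeMem α β e → P a (!e.1) e.2.1 → P a e.1 e.2.2)
    (final : ∀ a b l, P a l (ι₀ b) → (a, b) ∈ S) :
    comp β α ⊆ S := by
  rintro ⟨a, b⟩ ⟨L, ⟨-, hmem, hchain⟩, hhead, hlast⟩
  obtain ⟨e₀, he₀, hstart⟩ := Option.map_eq_some_iff.mp hhead
  obtain ⟨e, he, hend⟩ := Option.map_eq_some_iff.mp hlast
  have hinv : ∀ f ∈ L, P a f.1 f.2.2 := by
    refine (List.IsChain.iff_mem.mp hchain).induction _ _ ?_ ?_
    · rintro f g ⟨-, hg, hlabel, hjoin⟩ hf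
      refine step a g (hmem g hg) ?_
      rwa [← hjoin, ← Bool.eq_not_of_ne hlabel]
    · intro hne
      rw [Option.some_inj.mp ((List.head?_eq_some_head hne).symm.trans he₀)]
      exact init a e₀ (hmem e₀ (List.mem_of_head? he₀)) hstart
  exact final a b e.1 (hend ▸ hinv e (List.mem_of_getLast? he))

def rev (α : PBR X Y) : PBR Y X := {p | (p.1.swap, p.2.swap) ∈ α}

@[simp]
theorem rev_rev (α : PBR X Y) : rev (rev α) = α := by
  ext; simp [rev]

theorem rev_involutive : Function.Involutive (rev : PBR X X → PBR X X) := rev_rev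

theorem rev_subset_rev {α β : PBR X Y} : rev α ⊆ rev β ↔ α ⊆ β :=
  ⟨fun h p hp => by simpa [rev] using h (a := (p.1.swap, p.2.swap)) (by simpa [rev] using hp),
    fun h _ hp => h hp⟩

theorem forall_mem_rev {α : PBR X Y} {P : (Y ⊕ X) × (Y ⊕ X) → Prop} :
    (∀ p ∈ rev α, P p) ↔ ∀ p ∈ α, P (p.1.swap, p.2.swap) :=
  ⟨fun h _ hp => h _ (by simpa [rev] using hp), fun h p hp => by simpa using h _ hp⟩

def mirror : X ⊕ Y ⊕ Z → Z ⊕ Y ⊕ X := Sum.elim (ι₂ ∘ Sum.inr) (ι₁ ∘ Sum.swap)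

@[simp]
theorem mirror_ι₁ (p : X ⊕ Y) : mirror (Z := Z) (ι₁ p) = ι₂ p.swap := by
  cases p <;> rfl

@[simp]
theorem mirror_ι₂ (p : Y ⊕ Z) : mirror (X := X) (ι₂ p) = ι₁ p.swap := by
  cases p <;> rfl

@[simp]
theorem mirror_ι₀ (p : X ⊕ Z) : mirror (Y := Y) (ι₀ p) = ι₀ p.swap := by
  cases p <;> rfl

def mirrorEdge (e : Bool × (X ⊕ Y ⊕ Z) × (X ⊕ Y ⊕ Z)) : Bool × (Z ⊕ Y ⊕ X) × (Z ⊕ Y ⊕ X) :=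
  (!e.1, mirror e.2.1, mirror e.2.2)

theorem EdgeMem.mirrorEdge {α : PBR X Y} {β : PBR Y Z} {e : Bool × (X ⊕ Y ⊕ Z) × (X ⊕ Y ⊕ Z)}
    (he : EdgeMem α β e) : EdgeMem (rev β) (rev α) (mirrorEdge e) := by
  rcases e with ⟨_ | _, u, v⟩ <;> obtain ⟨p, hp, rfl, rfl⟩ := he <;>
    exact ⟨(p.1.swap, p.2.swap), by simpa [rev] using hp, by simp [PBRPaper.mirrorEdge]⟩

theorem ConnectsVia.mirrorEdge {α : PBR X Y} {β : PBR Y Z}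
    {L : List (Bool × (X ⊕ Y ⊕ Z) × (X ⊕ Y ⊕ Z))} {a b : X ⊕ Z} (h : ConnectsVia α β L a b) :
    ConnectsVia (rev β) (rev α) (L.map mirrorEdge) a.swap b.swap := by
  obtain ⟨⟨hne, hmem, hchain⟩, hhead, hlast⟩ := h
  refine ⟨⟨by simpa using hne, ?_, ?_⟩, ?_, ?_⟩
  · simpa only [List.forall_mem_map] using fun e he => (hmem e he).mirrorEdge
  · refine (List.isChain_map _).mpr (List.IsChain.imp ?_ hchain)
    rintro e f ⟨hlabel, hjoin⟩
    exact ⟨by simpa [PBRPaper.mirrorEdge] using hlabel, by simp [PBRPaper.mirrorEdge, hjoin]⟩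
  · simpa [List.head?_map, PBRPaper.mirrorEdge, Option.map_map] using
      congrArg (Option.map mirror) hhead
  · simpa [List.getLast?_map, PBRPaper.mirrorEdge, Option.map_map] using
      congrArg (Option.map mirror) hlast

theorem rev_comp_subset (α : PBR X Y) (β : PBR Y Z) :
    rev (comp β α) ⊆ comp (rev α) (rev β) := fun p ⟨L, hL⟩ => by
  have := hL.mirrorEdge
  simp only [Sum.swap_swap] at this
  exact ⟨_, this⟩

theorem comp_rev (α : PBR X Y) (β : PBR Y Z) : comp (rev α) (rev β) = rev (comp β α) := by
  refine subset_antisymm (fun p hp => ?_) (rev_comp_subset α β)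
  have := rev_comp_subset (rev β) (rev α) (a := (p.1.swap, p.2.swap)) (by simpa [rev] using hp)
  rwa [rev_rev, rev_rev] at this

/-- The possible label and endpoint of the last edge of an `(L θ', L θ)`-connected sequence
starting at `a`, in `X ⊕ X ⊕ X` read as domain, middle and codomain copy. -/
def LmapReach (θ θ' : Set (X × X)) : X ⊕ X → Bool → X ⊕ X ⊕ X → Prop
  | .inl x, false, v => v = .inr (.inl x)
  | .inl x, true, v => v = .inr (.inr x)
  | .inr c, false, v => v = .inl c ∨ ∃ c', (c, c') ∈ θ' ∧ v = .inr (.inl c')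
  | .inr c, true, v => v = .inr (.inl c) ∨ ∃ c', (c, c') ∈ θ ∪ θ' ∧ v = .inr (.inr c')

theorem comp_Lmap_subset (θ θ' : Set (X × X)) : comp (Lmap θ) (Lmap θ') ⊆ Lmap (θ ∪ θ') := by
  refine comp_subset_of_invariant (LmapReach θ θ') ?_ ?_ ?_
  · rintro (a | a) ⟨_ | _, u, v⟩ ⟨p, ⟨x, rfl | rfl⟩ | ⟨⟨q₁, q₂⟩, hq, rfl⟩, rfl, rfl⟩ h <;>
      simp_all [ι₀, ι₁, ι₂, LmapReach]
  · rintro (a | a) ⟨_ | _, u, v⟩ ⟨p, ⟨x, rfl | rfl⟩ | ⟨⟨q₁, q₂⟩, hq, rfl⟩, rfl, rfl⟩ h <;>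
      simp_all [ι₁, ι₂, LmapReach]
  · rintro (a | a) (b | b) (_ | _) h <;> simp_all [ι₀, LmapReach, Lmap, eps]

theorem subset_comp_Lmap (θ θ' : Set (X × X)) : Lmap (θ ∪ θ') ⊆ comp (Lmap θ) (Lmap θ') := by
  rintro _ (⟨x, rfl | rfl⟩ | ⟨⟨x, y⟩, hxy | hxy, rfl⟩) <;> [
    use [(false, .inl x, .inr (.inl x)), (true, .inr (.inl x), .inr (.inr x))];
    use [(true, .inr (.inr x), .inr (.inl x)), (false, .inr (.inl x), .inl x)];
    use [(true, .inr (.inr x), .inr (.inr y))];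
    use [(true, .inr (.inr x), .inr (.inl x)), (false, .inr (.inl x), .inr (.inl y)),
      (true, .inr (.inl y), .inr (.inr y))]] <;>
    simp_all [ConnectsVia, isConnSeq_iff, EdgeMem, Lmap, eps, ι₀, ι₁, ι₂]

theorem comp_Lmap (θ θ' : Set (X × X)) : comp (Lmap θ) (Lmap θ') = Lmap (θ ∪ θ') :=
  subset_antisymm (comp_Lmap_subset θ θ') (subset_comp_Lmap θ θ')

theorem inr_inr_mem_Lmap {θ : Set (X × X)} {x y : X} :
    (Sum.inr x, Sum.inr y) ∈ Lmap θ ↔ (x, y) ∈ θ := by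
  simp [Lmap, eps]

theorem Lmap_injective : Function.Injective (Lmap (X := X)) := fun θ θ' h => by
  ext ⟨x, y⟩
  rw [← inr_inr_mem_Lmap, h, inr_inr_mem_Lmap]

theorem range_Lmap : Set.range (Lmap (X := X)) = {α : PBR X X | IsLeftPol α} := by
  ext α
  constructor
  · rintro ⟨θ, rfl⟩
    refine ⟨Set.subset_union_left, ?_⟩
    rintro p (hp | ⟨q, -, rfl⟩)
    · exact Or.inl hp
    · exact Or.inr ⟨q.1, q.2, rfl⟩
  · rintro ⟨heps, hα⟩
    refine ⟨{q | (Sum.inr q.1, Sum.inr q.2) ∈ α}, Set.union_subset heps ?_ |>.antisymm ?_⟩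
    · rintro _ ⟨q, hq, rfl⟩
      exact hq
    · intro p hp
      rcases hα p hp with hp' | ⟨y, y', rfl⟩
      · exact Or.inl hp'
      · exact Or.inr ⟨(y, y'), hp, rfl⟩

@[simp]
theorem rev_eps : rev (eps X) = eps X := by
  ext ⟨a | a, b | b⟩ <;> simp [rev, eps, eq_comm]

theorem rev_Lmap (θ : Set (X × X)) : rev (Lmap θ) = Rmap θ := by
  ext ⟨a | a, b | b⟩ <;> simp [rev, Lmap, Rmap, eps]

theorem isLeftPol_rev_iff {α : PBR X X} : IsLeftPol (rev α) ↔ IsRightPol α := by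
  refine and_congr (by simpa using rev_subset_rev (α := eps X) (β := α))
    (forall_mem_rev.trans (forall₂_congr fun p _ => ?_))
  rcases p with ⟨a | a, b | b⟩ <;> simp [eps]

theorem Rmap_eq_rev_comp_Lmap : Rmap (X := X) = rev ∘ Lmap :=
  funext fun θ => (rev_Lmap θ).symm

theorem comp_Rmap (θ θ' : Set (X × X)) : comp (Rmap θ) (Rmap θ') = Rmap (θ ∪ θ') := by
  rw [← rev_Lmap, ← rev_Lmap, comp_rev, comp_Lmap, rev_Lmap, Set.union_comm]

theorem Rmap_injective : Function.Injective (Rmap (X := X)) :=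
  Rmap_eq_rev_comp_Lmap ▸ rev_involutive.injective.comp Lmap_injective

theorem range_Rmap : Set.range (Rmap (X := X)) = {α : PBR X X | IsRightPol α} := by
  rw [Rmap_eq_rev_comp_Lmap, Set.range_comp, range_Lmap, rev_involutive.image_eq_preimage_symm]
  ext α
  exact isLeftPol_rev_iff

theorem natCard_subtype_of_range_eq {α β : Type*} {f : α → β} (hf : Function.Injective f)
    {p : β → Prop} (h : Set.range f = {b | p b}) : Nat.card {b // p b} = Nat.card α := by
  rw [← Nat.card_range_of_injective hf, h]
  rfl

theorem natCard_set_prod_self [Fintype X] :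
    Nat.card (Set (X × X)) = 2 ^ (Fintype.card X ^ 2) := by
  rw [Nat.card_eq_fintype_card, Fintype.card_set, Fintype.card_prod, sq]

/-- `L(θ)∘L(θ') = L(θ ∪ θ')`, `L` is injective with image the set `PI(X,l)` of
left polarized idempotents, so `PI(X,l)` is a submonoid of PBRs on `(X,X)`
isomorphic to the semilattice of binary relations on `X` under union, and
`|PI(X,l)| = 2^{|X|²}`; and the analogous statements for `PI(X,r)`. -/
theorem polarized_idempotents_semilattice (X : Type) [Fintype X] :
    (∀ θ θ' : Set (X × X), comp (Lmap θ) (Lmap θ') = Lmap (θ ∪ θ')) ∧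
    Function.Injective (Lmap (X := X)) ∧
    Set.range (Lmap (X := X)) = {α : PBR X X | IsLeftPol α} ∧
    Nat.card {α : PBR X X // IsLeftPol α} = 2 ^ (Fintype.card X ^ 2) ∧
    (∀ θ θ' : Set (X × X), comp (Rmap θ) (Rmap θ') = Rmap (θ ∪ θ')) ∧
    Function.Injective (Rmap (X := X)) ∧
    Set.range (Rmap (X := X)) = {α : PBR X X | IsRightPol α} ∧
    Nat.card {α : PBR X X // IsRightPol α} = 2 ^ (Fintype.card X ^ 2) :=
  ⟨comp_Lmap, Lmap_injective, range_Lmap,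
    (natCard_subtype_of_range_eq Lmap_injective range_Lmap).trans natCard_set_prod_self,
    comp_Rmap, Rmap_injective, range_Rmap,
    (natCard_subtype_of_range_eq Rmap_injective range_Rmap).trans natCard_set_prod_self⟩

end PBRPaper
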